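/- arXiv:1510.07356 — 4 statements merged into one kernel-verified Lean document; each statement's English description precedes it below -/
import Mathlib

section
/- Proposition 1 (distributed form of the DQM updates). Define φ_k := E_oᵀ α_k for each k. Suppose the DQM iterates satisfy equations (i)–(iii) together with Assumption 1, and suppose that for each k the matrix 2c·D + H_k is invertible (this holds in particular when H_k is positive definite, since D is positive semidefinite). Then for every k ≥ 0: x_{k+1} = (2c·D + H_k)⁻¹ · [ (c·L_u + H_k)·x_k − ∇f(x_k) − φ_k ] and φ_{k+1} = φ_k + c·L_o·x_{k+1}. -/
open Matrix BigOperators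

/-- Proposition 1 (distributed form of the DQM updates). -/
theorem dqm_distributed_updates
    (n m p : ℕ) (hn : 0 < n) (hm : 0 < m) (hp : 0 < p)
    (c : ℝ) (hc0 : 0 < c)
    (As Ad : Matrix (Fin (m*p)) (Fin (n*p)) ℝ)
    -- the primal objective, its gradient and Hessian
    (f : (Fin (n*p) → ℝ) → ℝ)
    (gradf : (Fin (n*p) → ℝ) → (Fin (n*p) → ℝ))
    (Hess : (Fin (n*p) → ℝ) → Matrix (Fin (n*p)) (Fin (n*p)) ℝ)
    (hf : Differentiable ℝ f)
    (hgradf : ∀ y v, fderiv ℝ f y v = gradf y ⬝ᵥ v)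
    (hgrad_diff : Differentiable ℝ gradf)
    (hHessf : ∀ y v, fderiv ℝ gradf y v = (Hess y).mulVec v)
    -- stacked matrices, incidence matrices, Laplacians and degree matrix
    (A : Matrix (Fin (m*p) ⊕ Fin (m*p)) (Fin (n*p)) ℝ)
    (B : Matrix (Fin (m*p) ⊕ Fin (m*p)) (Fin (m*p)) ℝ)
    (hA : A = Matrix.fromRows As Ad)
    (hB : B = Matrix.fromRows (-1 : Matrix (Fin (m*p)) (Fin (m*p)) ℝ)
                              (-1 : Matrix (Fin (m*p)) (Fin (m*p)) ℝ))
    (Eo Eu : Matrix (Fin (m*p)) (Fin (n*p)) ℝ)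
    (hEo : Eo = As - Ad) (hEu : Eu = As + Ad)
    (Lo Lu D : Matrix (Fin (n*p)) (Fin (n*p)) ℝ)
    (hLo : Lo = (1/2 : ℝ) • (Eoᵀ * Eo))
    (hLu : Lu = (1/2 : ℝ) • (Euᵀ * Eu))
    (hD : D = (1/2 : ℝ) • (Lu + Lo))
    -- the DQM iterates
    (x : ℕ → Fin (n*p) → ℝ) (z : ℕ → Fin (m*p) → ℝ)
    (α β : ℕ → Fin (m*p) → ℝ)
    (hrec1 : ∀ k, gradf (x k) + (Hess (x k)).mulVec (x (k+1) - x k)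
        + Aᵀ.mulVec (Sum.elim (α k) (β k))
        + c • Aᵀ.mulVec (A.mulVec (x (k+1)) + B.mulVec (z k)) = 0)
    (hrec2 : ∀ k, Bᵀ.mulVec (Sum.elim (α k) (β k))
        + c • Bᵀ.mulVec (A.mulVec (x (k+1)) + B.mulVec (z (k+1))) = 0)
    (hrec3 : ∀ k, Sum.elim (α (k+1)) (β (k+1))
        = Sum.elim (α k) (β k) + c • (A.mulVec (x (k+1)) + B.mulVec (z (k+1))))
    -- Assumption 1 (initialization)
    (hinit1 : α 0 = - β 0)
    (hinit2 : Eu.mulVec (x 0) = (2:ℝ) • z 0)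
    (hinit3 : ∃ u, α 0 = Eo.mulVec u)
    -- invertibility of the update matrices
    (hinv : ∀ k, IsUnit ((2 * c) • D + Hess (x k)).det)
    -- the dual variables φ_k := E_oᵀ α_k
    (φ : ℕ → Fin (n*p) → ℝ)
    (hφ : ∀ k, φ k = Eoᵀ.mulVec (α k)) :
    ∀ k : ℕ,
      x (k+1) = ((2 * c) • D + Hess (x k))⁻¹.mulVec
          ((c • Lu + Hess (x k)).mulVec (x k) - gradf (x k) - φ k) ∧
      φ (k+1) = φ k + c • Lo.mulVec (x (k+1)) := by
  have hc : c ≠ 0 := ne_of_gt hc0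
  subst hA hB hEo hEu hLo hLu hD
  -- combined mulVec of the stacked system
  have hAB : ∀ (v : Fin (n*p) → ℝ) (w : Fin (m*p) → ℝ),
      Matrix.fromRows As Ad *ᵥ v
        + Matrix.fromRows (-1 : Matrix (Fin (m*p)) (Fin (m*p)) ℝ) (-1) *ᵥ w
        = Sum.elim (As *ᵥ v - w) (Ad *ᵥ v - w) := by
    intro v w
    simp only [Matrix.fromRows_mulVec, Matrix.neg_mulVec, Matrix.one_mulVec]
    funext i
    cases i <;> simp [sub_eq_add_neg]
  have hBt : ∀ (u v : Fin (m*p) → ℝ),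
      (Matrix.fromRows (-1 : Matrix (Fin (m*p)) (Fin (m*p)) ℝ) (-1))ᵀ *ᵥ Sum.elim u v
        = -(u + v) := by
    intro u v
    rw [Matrix.transpose_fromRows, Matrix.transpose_neg, Matrix.transpose_one,
      Matrix.fromCols_mulVec_sumElim, Matrix.neg_mulVec, Matrix.neg_mulVec,
      Matrix.one_mulVec, Matrix.one_mulVec, neg_add]
  have hAt : ∀ (u v : Fin (m*p) → ℝ),
      (Matrix.fromRows As Ad)ᵀ *ᵥ Sum.elim u v = Asᵀ *ᵥ u + Adᵀ *ᵥ v := by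
    intro u v
    rw [Matrix.transpose_fromRows, Matrix.fromCols_mulVec_sumElim]
  -- rewritten recursions
  have hrec2' : ∀ k,
      -(α k + β k) + c • -(As *ᵥ x (k+1) - z (k+1) + (Ad *ᵥ x (k+1) - z (k+1))) = 0 := by
    intro k
    have h := hrec2 k
    rw [hAB, hBt, hBt] at h
    exact h
  have hrec3a : ∀ k, α (k+1) = α k + c • (As *ᵥ x (k+1) - z (k+1)) := by
    intro k
    have h := hrec3 k
    rw [hAB] at h
    funext i
    simpa using congrFun h (Sum.inl i)
  have hrec3b : ∀ k, β (k+1) = β k + c • (Ad *ᵥ x (k+1) - z (k+1)) := by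
    intro k
    have h := hrec3 k
    rw [hAB] at h
    funext i
    simpa using congrFun h (Sum.inr i)
  -- α k + β k = 0 for all k
  have hsum : ∀ k, α k + β k = 0 := by
    intro k
    cases k with
    | zero => rw [hinit1]; simp
    | succ k =>
      have h2 := hrec2' k
      rw [hrec3a k, hrec3b k]
      linear_combination (norm := module) -h2
  -- 2 z_k = E_u x_k for all k
  have hz : ∀ k, (2:ℝ) • z k = (As + Ad) *ᵥ x k := by
    intro k
    cases k with
    | zero => exact hinit2.symm
    | succ k =>
      have h2 := hrec2' k
      rw [hsum k] at h2
      have h3 : c • ((2:ℝ) • z (k+1) - (As + Ad) *ᵥ x (k+1)) = 0 := by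
        rw [Matrix.add_mulVec]
        linear_combination (norm := module) h2
      rcases smul_eq_zero.mp h3 with h | h
      · exact absurd h hc
      · linear_combination (norm := module) h
  have hz' : ∀ k, z k = (1/2 : ℝ) • ((As + Ad) *ᵥ x k) := by
    intro k
    rw [← hz k]
    module
  intro k
  have hβ : β k = -α k := by
    have h := hsum k
    funext i
    have := congrFun h i
    simp only [Pi.add_apply, Pi.zero_apply] at this
    simp only [Pi.neg_apply]
    linarith
  -- the key linear equation for x (k+1)
  have key : ((2 * c) • ((1/2 : ℝ) • ((1/2 : ℝ) • ((As + Ad)ᵀ * (As + Ad))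
        + (1/2 : ℝ) • ((As - Ad)ᵀ * (As - Ad)))) + Hess (x k)) *ᵥ x (k+1)
      = (c • ((1/2 : ℝ) • ((As + Ad)ᵀ * (As + Ad))) + Hess (x k)) *ᵥ x k
        - gradf (x k) - φ k := by
    have h1 := hrec1 k
    rw [hAB, hAt, hAt, hβ, hz' k] at h1
    rw [hφ k]
    -- normalize matrix-vector products
    simp only [Matrix.transpose_add, Matrix.transpose_sub, Matrix.add_mulVec,
      Matrix.sub_mulVec, Matrix.smul_mulVec, ← Matrix.mulVec_mulVec,
      Matrix.mulVec_add, Matrix.mulVec_sub, Matrix.mulVec_smul, Matrix.neg_mulVec,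
      Matrix.mulVec_neg] at h1 ⊢
    linear_combination (norm := module) h1
  refine ⟨?_, ?_⟩
  · have hM := hinv k
    rw [← key, Matrix.mulVec_mulVec, Matrix.nonsing_inv_mul _ hM, Matrix.one_mulVec]
  · -- φ update
    rw [hφ (k+1), hφ k, hrec3a k, hz' (k+1)]
    simp only [Matrix.transpose_add, Matrix.transpose_sub, Matrix.add_mulVec,
      Matrix.sub_mulVec, Matrix.smul_mulVec, ← Matrix.mulVec_mulVec,
      Matrix.mulVec_add, Matrix.mulVec_sub, Matrix.mulVec_smul,
      Matrix.neg_mulVec, Matrix.mulVec_neg]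
    module
end

section
/- Auxiliary-variable invariant of DQM. Suppose the sequences (x_k), (z_k), (α_k), (β_k) satisfy, for all k ≥ 0, DQM equations (ii) and (iii), and suppose α_0 = −β_0 and E_u x_0 = 2 z_0. Then E_u x_k = 2 z_k for all k ≥ 0; equivalently, z_k = (1/2)·E_u x_k for every k. -/
open Matrix BigOperators

/-- Auxiliary-variable invariant of DQM: `E_u x_k = 2 z_k` for all `k`,
equivalently `z_k = (1/2) E_u x_k`. -/
theorem dqm_auxiliary_variable_invariant
    (n m p : ℕ) (hn : 0 < n) (hm : 0 < m) (hp : 0 < p)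
    (c : ℝ) (hc0 : 0 < c)
    (As Ad : Matrix (Fin (m*p)) (Fin (n*p)) ℝ)
    (A : Matrix (Fin (m*p) ⊕ Fin (m*p)) (Fin (n*p)) ℝ)
    (B : Matrix (Fin (m*p) ⊕ Fin (m*p)) (Fin (m*p)) ℝ)
    (hA : A = Matrix.fromRows As Ad)
    (hB : B = Matrix.fromRows (-1 : Matrix (Fin (m*p)) (Fin (m*p)) ℝ)
                              (-1 : Matrix (Fin (m*p)) (Fin (m*p)) ℝ))
    (Eu : Matrix (Fin (m*p)) (Fin (n*p)) ℝ)
    (hEu : Eu = As + Ad)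
    (x : ℕ → Fin (n*p) → ℝ) (z : ℕ → Fin (m*p) → ℝ)
    (α β : ℕ → Fin (m*p) → ℝ)
    (hrec2 : ∀ k, Bᵀ.mulVec (Sum.elim (α k) (β k))
        + c • Bᵀ.mulVec (A.mulVec (x (k+1)) + B.mulVec (z (k+1))) = 0)
    (hrec3 : ∀ k, Sum.elim (α (k+1)) (β (k+1))
        = Sum.elim (α k) (β k) + c • (A.mulVec (x (k+1)) + B.mulVec (z (k+1))))
    (hinit1 : α 0 = - β 0)
    (hinit2 : Eu.mulVec (x 0) = (2:ℝ) • z 0) :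
    ∀ k : ℕ, Eu.mulVec (x k) = (2:ℝ) • z k ∧ z k = (1/2 : ℝ) • Eu.mulVec (x k) := by
  -- rewrite A·x + B·z as a Sum.elim
  have hABz : ∀ k, A.mulVec (x (k+1)) + B.mulVec (z (k+1))
      = Sum.elim (As.mulVec (x (k+1)) - z (k+1)) (Ad.mulVec (x (k+1)) - z (k+1)) := by
    intro k
    rw [hA, hB, Matrix.fromRows_mulVec, Matrix.fromRows_mulVec]
    funext i
    cases i <;> simp [Matrix.neg_mulVec, sub_eq_add_neg]
  have hBT : ∀ (u v : Fin (m*p) → ℝ), Bᵀ.mulVec (Sum.elim u v) = -(u + v) := by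
    intro u v
    rw [hB, Matrix.transpose_fromRows, Matrix.fromCols_mulVec_sumElim]
    simp [Matrix.neg_mulVec]
    abel
  -- equation (ii) in scalar-vector form
  have hii : ∀ k, (α k + β k)
      + c • (Eu.mulVec (x (k+1)) - (2:ℝ) • z (k+1)) = 0 := by
    intro k
    have h := hrec2 k
    rw [hABz k, hBT, hBT] at h
    have h2 : -((α k + β k) + c • (Eu.mulVec (x (k+1)) - (2:ℝ) • z (k+1))) = 0 := by
      rw [← h]
      rw [hEu, Matrix.add_mulVec]
      funext i
      simp
      ring
    have := congrArg Neg.neg h2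
    simpa using this
  -- sums of multipliers vanish
  have hsum : ∀ k, α k + β k = 0 := by
    intro k
    cases k with
    | zero => rw [hinit1]; abel
    | succ k =>
      have hα : α (k+1) = α k + c • (As.mulVec (x (k+1)) - z (k+1)) := by
        funext i
        have := congrFun (hrec3 k) (Sum.inl i)
        rw [hABz k] at this
        simpa using this
      have hβ : β (k+1) = β k + c • (Ad.mulVec (x (k+1)) - z (k+1)) := by
        funext i
        have := congrFun (hrec3 k) (Sum.inr i)
        rw [hABz k] at this
        simpa using this
      have h := hii k
      rw [hα, hβ]
      rw [← h]
      rw [hEu, Matrix.add_mulVec]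
      funext i
      simp
      ring
  have hmain : ∀ k, Eu.mulVec (x k) = (2:ℝ) • z k := by
    intro k
    cases k with
    | zero => exact hinit2
    | succ k =>
      have h := hii k
      rw [hsum k, zero_add] at h
      have h2 : Eu.mulVec (x (k+1)) - (2:ℝ) • z (k+1) = 0 := by
        have := smul_eq_zero.mp h
        rcases this with hc | hv
        · exact absurd hc (ne_of_gt hc0)
        · exact hv
      exact sub_eq_zero.mp h2
  intro k
  refine ⟨hmain k, ?_⟩
  rw [hmain k]
  funext i
  simp
end

section
/- Reduced dual update and column-space invariant of DQM. Suppose the sequences (x_k), (z_k), (α_k), (β_k) satisfy, for all k ≥ 0, DQM equations (ii) and (iii), and suppose α_0 = −β_0, E_u x_0 = 2 z_0, and α_0 lies in the column space of E_o. Then for all k ≥ 0: α_{k+1} = α_k + (c/2)·E_o x_{k+1}, and consequently every α_k lies in the column space of E_o. -/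
open Matrix BigOperators

/-- Reduced dual update and column-space invariant of DQM:
`α_{k+1} = α_k + (c/2) E_o x_{k+1}`, and every `α_k` lies in the
column space of `E_o`. -/
theorem dqm_reduced_dual_update
    (n m p : ℕ) (hn : 0 < n) (hm : 0 < m) (hp : 0 < p)
    (c : ℝ) (hc0 : 0 < c)
    (As Ad : Matrix (Fin (m*p)) (Fin (n*p)) ℝ)
    (A : Matrix (Fin (m*p) ⊕ Fin (m*p)) (Fin (n*p)) ℝ)
    (B : Matrix (Fin (m*p) ⊕ Fin (m*p)) (Fin (m*p)) ℝ)
    (hA : A = Matrix.fromRows As Ad)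
    (hB : B = Matrix.fromRows (-1 : Matrix (Fin (m*p)) (Fin (m*p)) ℝ)
                              (-1 : Matrix (Fin (m*p)) (Fin (m*p)) ℝ))
    (Eu : Matrix (Fin (m*p)) (Fin (n*p)) ℝ)
    (hEu : Eu = As + Ad)
    (x : ℕ → Fin (n*p) → ℝ) (z : ℕ → Fin (m*p) → ℝ)
    (α β : ℕ → Fin (m*p) → ℝ)
    (hrec2 : ∀ k, Bᵀ.mulVec (Sum.elim (α k) (β k))
        + c • Bᵀ.mulVec (A.mulVec (x (k+1)) + B.mulVec (z (k+1))) = 0)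
    (hrec3 : ∀ k, Sum.elim (α (k+1)) (β (k+1))
        = Sum.elim (α k) (β k) + c • (A.mulVec (x (k+1)) + B.mulVec (z (k+1))))
    (Eo : Matrix (Fin (m*p)) (Fin (n*p)) ℝ)
    (hEo : Eo = As - Ad)
    (hinit1 : α 0 = - β 0)
    (hinit2 : Eu.mulVec (x 0) = (2:ℝ) • z 0)
    (hinit3 : ∃ u, α 0 = Eo.mulVec u) :
    (∀ k : ℕ, α (k+1) = α k + (c/2) • Eo.mulVec (x (k+1))) ∧
    (∀ k : ℕ, ∃ u, α k = Eo.mulVec u) := by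
  -- notation for components
  have hBT : Bᵀ = Matrix.fromCols (-1 : Matrix (Fin (m*p)) (Fin (m*p)) ℝ)
      (-1 : Matrix (Fin (m*p)) (Fin (m*p)) ℝ) := by
    rw [hB, Matrix.transpose_fromRows]; simp
  have hv : ∀ k, A.mulVec (x (k+1)) + B.mulVec (z (k+1))
      = Sum.elim (As.mulVec (x (k+1)) - z (k+1)) (Ad.mulVec (x (k+1)) - z (k+1)) := by
    intro k
    rw [hA, hB, Matrix.fromRows_mulVec, Matrix.fromRows_mulVec]
    funext i
    cases i <;> simp [Matrix.neg_mulVec, sub_eq_add_neg]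
  -- scalar form of equation (ii)
  have h2 : ∀ k i, -(α k i) - β k i
      + c * (-(As.mulVec (x (k+1)) i - z (k+1) i) - (Ad.mulVec (x (k+1)) i - z (k+1) i)) = 0 := by
    intro k i
    have := congrFun (hrec2 k) i
    rw [hv k, hBT, Matrix.fromCols_mulVec_sumElim,
      Matrix.fromCols_mulVec_sumElim] at this
    simpa [Matrix.neg_mulVec, mul_comm, sub_eq_add_neg, add_assoc, mul_add] using this
  -- scalar components of equation (iii)
  have h3a : ∀ k i, α (k+1) i = α k i + c * (As.mulVec (x (k+1)) i - z (k+1) i) := by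
    intro k i
    have := congrFun (hrec3 k) (Sum.inl i)
    rw [hv k] at this
    simpa using this
  have h3b : ∀ k i, β (k+1) i = β k i + c * (Ad.mulVec (x (k+1)) i - z (k+1) i) := by
    intro k i
    have := congrFun (hrec3 k) (Sum.inr i)
    rw [hv k] at this
    simpa using this
  -- invariant: α k + β k = 0
  have hsum : ∀ k i, α k i + β k i = 0 := by
    intro k
    induction k with
    | zero => intro i; have := congrFun hinit1 i; simp at this; linarith
    | succ k ih =>
      intro i
      have h2' := h2 k i
      have := ih i
      rw [h3a k i, h3b k i]
      nlinarith [h2 k i]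
  have main : ∀ k : ℕ, α (k+1) = α k + (c/2) • Eo.mulVec (x (k+1)) := by
    intro k
    funext i
    have hEoi : Eo.mulVec (x (k+1)) i = As.mulVec (x (k+1)) i - Ad.mulVec (x (k+1)) i := by
      rw [hEo, Matrix.sub_mulVec]; simp
    have h2' := h2 k i
    have hs := hsum k i
    have h3 := h3a k i
    simp only [Pi.add_apply, Pi.smul_apply, smul_eq_mul, hEoi, h3]
    nlinarith
  refine ⟨main, ?_⟩
  intro k
  induction k with
  | zero => exact hinit3
  | succ k ih =>
    obtain ⟨u, hu⟩ := ih
    refine ⟨u + (c/2) • x (k+1), ?_⟩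
    rw [main k, hu, Matrix.mulVec_add, Matrix.mulVec_smul]
end

section
/- Characterization and closed form of the auxiliary-variable update. Let x ∈ ℝ^(np), λ = (α; β) ∈ ℝ^(2mp) with α, β ∈ ℝ^(mp), and c > 0. Define g : ℝ^(mp) → ℝ by g(z) := λᵀ(A x + B z) + (c/2)·‖A x + B z‖². Then g is strictly convex (its Hessian is c·BᵀB = 2c·I) and has a unique global minimizer z̄, characterized by Bᵀλ + c·Bᵀ(A x + B z̄) = 0, and given explicitly by z̄ = (1/2)·E_u x + (1/(2c))·(α + β). -/
open Matrix BigOperators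

/-- Euclidean squared norm of a vector given as a function. -/
noncomputable def sqnorm {ι : Type*} [Fintype ι] (v : ι → ℝ) : ℝ := ∑ i, v i ^ 2

/-- Characterization and closed form of the auxiliary-variable (`z`) update
of DQM/DADMM. -/
theorem dqm_auxiliary_update_characterization
    (n m p : ℕ) (hn : 0 < n) (hm : 0 < m) (hp : 0 < p)
    (As Ad : Matrix (Fin (m*p)) (Fin (n*p)) ℝ)
    (A : Matrix (Fin (m*p) ⊕ Fin (m*p)) (Fin (n*p)) ℝ)
    (B : Matrix (Fin (m*p) ⊕ Fin (m*p)) (Fin (m*p)) ℝ)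
    (hA : A = Matrix.fromRows As Ad)
    (hB : B = Matrix.fromRows (-1 : Matrix (Fin (m*p)) (Fin (m*p)) ℝ)
                              (-1 : Matrix (Fin (m*p)) (Fin (m*p)) ℝ))
    (Eu : Matrix (Fin (m*p)) (Fin (n*p)) ℝ)
    (hEu : Eu = As + Ad)
    (x : Fin (n*p) → ℝ) (α β : Fin (m*p) → ℝ)
    (lam : Fin (m*p) ⊕ Fin (m*p) → ℝ)
    (hlam : lam = Sum.elim α β)
    (c : ℝ) (hc : 0 < c)
    (g : (Fin (m*p) → ℝ) → ℝ)
    (hg : ∀ z : Fin (m*p) → ℝ,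
      g z = lam ⬝ᵥ (A.mulVec x + B.mulVec z)
        + (c/2) * sqnorm (A.mulVec x + B.mulVec z)) :
    -- the Hessian of g is c·BᵀB = 2c·I
    (c • (Bᵀ * B) = (2 * c) • (1 : Matrix (Fin (m*p)) (Fin (m*p)) ℝ)) ∧
    StrictConvexOn ℝ Set.univ g ∧
    (∃! zbar : Fin (m*p) → ℝ, ∀ w, g zbar ≤ g w) ∧
    (∀ zbar : Fin (m*p) → ℝ,
      (∀ w, g zbar ≤ g w) ↔
      Bᵀ.mulVec lam + c • Bᵀ.mulVec (A.mulVec x + B.mulVec zbar) = 0) ∧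
    (∀ zbar : Fin (m*p) → ℝ,
      (∀ w, g zbar ≤ g w) →
      zbar = (1/2 : ℝ) • Eu.mulVec x + (1/(2*c)) • (α + β)) := by
  subst hA hB hEu hlam
  have hc0 : c ≠ 0 := hc.ne'
  set u := As.mulVec x with hu
  set v := Ad.mulVec x with hv
  set a : Fin (m*p) → ℝ := fun i => (u i + v i)/2 + (α i + β i)/(2*c) with ha
  -- rewrite g as an explicit sum
  have hsum : ∀ w : Fin (m*p) → ℝ,
      Matrix.fromRows As Ad *ᵥ x +
        Matrix.fromRows (-1 : Matrix (Fin (m*p)) (Fin (m*p)) ℝ) (-1) *ᵥ w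
      = Sum.elim (u - w) (v - w) := by
    intro w
    funext j
    cases j with
    | inl i => simp [Matrix.fromRows_mulVec, Matrix.neg_mulVec, hu, sub_eq_add_neg]
    | inr i => simp [Matrix.fromRows_mulVec, Matrix.neg_mulVec, hv, sub_eq_add_neg]
  have hg' : ∀ w : Fin (m*p) → ℝ,
      g w = ∑ i, (α i * (u i - w i) + β i * (v i - w i)
        + (c/2) * ((u i - w i)^2 + (v i - w i)^2)) := by
    intro w
    rw [hg, hsum]
    simp only [sqnorm, dotProduct, Fintype.sum_sum_type, Sum.elim_inl, Sum.elim_inr,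
      Pi.sub_apply]
    rw [mul_add, Finset.mul_sum, Finset.mul_sum, ← Finset.sum_add_distrib,
      ← Finset.sum_add_distrib, ← Finset.sum_add_distrib]
    exact Finset.sum_congr rfl fun i _ => by ring
  -- key identity: complete the square
  have hkey : ∀ w : Fin (m*p) → ℝ,
      g w = c * (∑ i, (w i - a i)^2) + g a := by
    intro w
    rw [hg' w, hg' a, Finset.mul_sum, ← Finset.sum_add_distrib]
    refine Finset.sum_congr rfl fun i _ => ?_
    simp only [ha]
    field_simp
    ring
  have hmin : ∀ w, g a ≤ g w := by
    intro w
    rw [hkey w]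
    have h1 : (0:ℝ) ≤ ∑ i, (w i - a i)^2 :=
      Finset.sum_nonneg fun i _ => sq_nonneg _
    nlinarith
  have hmin_iff : ∀ z : Fin (m*p) → ℝ, (∀ w, g z ≤ g w) ↔ z = a := by
    intro z
    constructor
    · intro h
      have h1 := h a
      rw [hkey z] at h1
      have h2 : (0:ℝ) ≤ ∑ i, (z i - a i)^2 :=
        Finset.sum_nonneg fun i _ => sq_nonneg _
      have h3 : ∑ i, (z i - a i)^2 = 0 := by nlinarith
      funext i
      have h4 := (Finset.sum_eq_zero_iff_of_nonneg
        (fun i _ => sq_nonneg (z i - a i))).mp h3 i (Finset.mem_univ i)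
      have := pow_eq_zero_iff (n := 2) (by norm_num) |>.mp h4
      linarith [sub_eq_zero.mp this]
    · rintro rfl; exact hmin
  refine ⟨?_, ?_, ?_, ?_, ?_⟩
  · -- Hessian
    rw [Matrix.transpose_fromRows, Matrix.fromCols_mul_fromRows]
    ext i j
    simp [Matrix.one_apply]
    split <;> ring
  · -- strict convexity
    refine ⟨convex_univ, ?_⟩
    intro x₁ _ x₂ _ hne ta tb hta htb hab
    rw [hkey x₁, hkey x₂, hkey (ta • x₁ + tb • x₂)]
    have hmid : ∀ i, (ta • x₁ + tb • x₂) i - a i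
        = ta * (x₁ i - a i) + tb * (x₂ i - a i) := by
      intro i
      have : ta * a i + tb * a i = a i := by
        rw [← add_mul, hab, one_mul]
      simp only [Pi.add_apply, Pi.smul_apply, smul_eq_mul]
      linarith
    have hS : ∑ i, ((ta • x₁ + tb • x₂) i - a i)^2
        = ta * (∑ i, (x₁ i - a i)^2) + tb * (∑ i, (x₂ i - a i)^2)
          - ta * tb * ∑ i, (x₁ i - x₂ i)^2 := by
      rw [Finset.mul_sum, Finset.mul_sum, Finset.mul_sum,
        ← Finset.sum_add_distrib, ← Finset.sum_sub_distrib]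
      refine Finset.sum_congr rfl fun i _ => ?_
      rw [hmid i]
      have h1 : tb = 1 - ta := by linarith
      subst h1
      ring
    have hD : 0 < ∑ i, (x₁ i - x₂ i)^2 := by
      obtain ⟨i, hi⟩ := Function.ne_iff.mp hne
      refine Finset.sum_pos' (fun i _ => sq_nonneg _) ⟨i, Finset.mem_univ i, ?_⟩
      have h5 : x₁ i - x₂ i ≠ 0 := sub_ne_zero.mpr hi
      positivity
    have hpos : 0 < ta * tb * (c * ∑ i, (x₁ i - x₂ i)^2) :=
      mul_pos (mul_pos hta htb) (mul_pos hc hD)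
    have hga : ta * g a + tb * g a = g a := by rw [← add_mul, hab, one_mul]
    rw [hS]
    simp only [smul_eq_mul]
    nlinarith [hpos, hga]
  · -- unique minimizer
    exact ⟨a, hmin, fun z hz => (hmin_iff z).mp hz⟩
  · -- first-order condition
    intro z
    rw [hmin_iff z]
    have hBt : (Matrix.fromRows (-1 : Matrix (Fin (m*p)) (Fin (m*p)) ℝ) (-1))ᵀ
        = Matrix.fromCols (-1 : Matrix (Fin (m*p)) (Fin (m*p)) ℝ) (-1 : Matrix (Fin (m*p)) (Fin (m*p)) ℝ) := by
      rw [Matrix.transpose_fromRows, Matrix.transpose_neg, Matrix.transpose_one]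
    have hfoc : (Matrix.fromRows (-1 : Matrix (Fin (m*p)) (Fin (m*p)) ℝ) (-1))ᵀ *ᵥ
          Sum.elim α β
        + c • (Matrix.fromRows (-1 : Matrix (Fin (m*p)) (Fin (m*p)) ℝ) (-1))ᵀ *ᵥ
          (Matrix.fromRows As Ad *ᵥ x +
            Matrix.fromRows (-1 : Matrix (Fin (m*p)) (Fin (m*p)) ℝ) (-1) *ᵥ z)
        = fun i => -(α i + β i) + c * (2 * z i - u i - v i) := by
      rw [hsum z, hBt, Matrix.fromCols_mulVec_sumElim,
        Matrix.fromCols_mulVec_sumElim]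
      funext i
      simp [Matrix.neg_mulVec, mul_comm]
      ring
    constructor
    · rintro rfl
      rw [hfoc]
      funext i
      simp only [ha, Pi.zero_apply]
      field_simp
      ring
    · intro h
      rw [hfoc] at h
      funext i
      have := congrFun h i
      simp only [Pi.zero_apply] at this
      simp only [ha]
      field_simp
      linarith
  · -- closed form
    intro z hz
    rw [(hmin_iff z).mp hz]
    funext i
    simp only [ha, Pi.add_apply, Pi.smul_apply, smul_eq_mul, Matrix.add_mulVec,
      Pi.add_apply]
    rw [← hu, ← hv]
    field_simp
end
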